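/- arXiv:1107.3608 — 3 statements merged into one kernel-verified Lean document; each statement's English description precedes it below -/
import Mathlib

section
/- Let A be a real symmetric positive semidefinite (p+q)×(p+q) matrix with block form A = [[A₁₁,A₁₂],[A₂₁,A₂₂]] (A₁₁ of size p×p, A₂₂ of size q×q, A₂₁ = A₁₂ᵀ). Then: (i) there exists a q×p matrix i with A₂₂·i = A₂₁, and every x ∈ ℝ^q with A₂₂x = 0 satisfies A₁₂x = 0; consequently the kernel-image trace Tr_KI^q(I − A) (tracing out the last q coordinates of the map I − A : ℝ^p⊕ℝ^q → ℝ^p⊕ℝ^q) is defined; and (ii) for any i with A₂₂·i = A₂₁, setting A' := A₁₁ − A₁₂·i, one has Tr_KI^q(I − A) = I_p − A', and for every v ∈ ℝ^p the quantity vᵀA'v is the minimum over w ∈ ℝ^q of the quadratic form (v,w)ᵀ A (v,w), the minimum being attained at w = −i·v. -/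
/-!
If `A₂₂ x = 0` then `(0, x)` is isotropic for the positive semidefinite `A`, hence lies in its
kernel, so `A₁₂ x = 0`. Thus the columns of `A₂₁ = A₁₂ᵀ` are orthogonal to `ker A₂₂`, which for
the symmetric `A₂₂` is `(range A₂₂)ᗮ`; this gives `i` with `A₂₂ i = A₂₁`. Symmetry then yields
`A₁₂ = iᵀ A₂₂`, and completing the square gives
`(v, w)ᵀ A (v, w) = vᵀ A' v + (w + i v)ᵀ A₂₂ (w + i v)`, from which the minimisation follows.
The same identity `A₁₂ = iᵀ A₂₂` shows `A₁₂ i' = -A₁₂ i` for every witness `(k, i')`, which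
computes the trace.
-/

open Matrix

/-- A witness for the kernel-image trace of `f` that traces out the last block. -/
def KIWm {p q : ℕ} (f : Matrix (Fin p ⊕ Fin q) (Fin p ⊕ Fin q) ℝ)
    (k : Matrix (Fin p) (Fin q) ℝ) (i : Matrix (Fin q) (Fin p) ℝ) : Prop :=
  (1 - f.toBlocks₂₂) * i = f.toBlocks₂₁ ∧ k * (1 - f.toBlocks₂₂) = f.toBlocks₁₂

open scoped ComplexOrder

namespace Matrix

section Solvability

variable {𝕜 n : Type*} [RCLike 𝕜] [Fintype n] [DecidableEq n] {M : Matrix n n 𝕜}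

theorem IsHermitian.exists_mulVec_eq (hM : M.IsHermitian) {y : n → 𝕜}
    (hy : ∀ x, M *ᵥ x = 0 → y ⬝ᵥ star x = 0) : ∃ x, M *ᵥ x = y := by
  have hy' : WithLp.toLp 2 y ∈ LinearMap.range M.toEuclideanLin := by
    rw [← Submodule.orthogonal_orthogonal (LinearMap.range _),
      (isSymmetric_toEuclideanLin_iff.mpr hM).orthogonal_range]
    intro x hx
    rw [EuclideanSpace.inner_eq_star_dotProduct]
    exact hy _ (by simpa using congrArg WithLp.ofLp hx)
  obtain ⟨x, hx⟩ := hy'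
  exact ⟨x.ofLp, by simpa using congrArg WithLp.ofLp hx⟩

theorem IsHermitian.exists_mul_eq {k : Type*} (hM : M.IsHermitian) {N : Matrix n k 𝕜}
    (hN : ∀ x, M *ᵥ x = 0 → Nᴴ *ᵥ x = 0) : ∃ X, M * X = N := by
  have hcol (j : k) : ∃ x, M *ᵥ x = fun r => N r j :=
    hM.exists_mulVec_eq fun x hx => by
      simpa [mulVec, dotProduct, mul_comm] using congrArg star (congrFun (hN x hx) j)
  choose X hX using hcol
  exact ⟨of fun r j => X j r, Matrix.ext fun r j => congrFun (hX j) r⟩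

end Solvability

theorem PosSemidef.toBlocks₁₂_mulVec_eq_zero {𝕜 m n : Type*} [RCLike 𝕜] [Fintype m] [Fintype n]
    {A : Matrix (m ⊕ n) (m ⊕ n) 𝕜} (hA : A.PosSemidef) {x : n → 𝕜}
    (hx : A.toBlocks₂₂ *ᵥ x = 0) : A.toBlocks₁₂ *ᵥ x = 0 := by
  have hblock : A *ᵥ Sum.elim 0 x = Sum.elim (A.toBlocks₁₂ *ᵥ x) 0 := by
    rw [← A.fromBlocks_toBlocks, fromBlocks_mulVec]
    simp [hx]
  have hzero : A *ᵥ Sum.elim 0 x = 0 :=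
    (hA.dotProduct_mulVec_zero_iff _).mp (by simp [hblock, dotProduct, Fintype.sum_sum_type])
  simpa using congrArg (· ∘ Sum.inl) (hblock.symm.trans hzero)

section HermitianBlocks

variable {α m n : Type*} [CommRing α] [StarRing α] {A : Matrix (m ⊕ n) (m ⊕ n) α}
  {i : Matrix n m α}

theorem IsHermitian.conjTranspose_toBlocks₂₁ (hA : A.IsHermitian) :
    A.toBlocks₂₁ᴴ = A.toBlocks₁₂ :=
  (isHermitian_fromBlocks_iff.mp (A.fromBlocks_toBlocks.symm ▸ hA)).2.2.1

theorem IsHermitian.toBlocks₁₂_eq_conjTranspose_mul [Fintype n] (hA : A.IsHermitian)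
    (hi : A.toBlocks₂₂ * i = A.toBlocks₂₁) : A.toBlocks₁₂ = iᴴ * A.toBlocks₂₂ := by
  have h₂₂ : A.toBlocks₂₂.IsHermitian := hA.submatrix Sum.inr
  rw [← hA.conjTranspose_toBlocks₂₁, ← hi, conjTranspose_mul, h₂₂.eq]

theorem IsHermitian.star_sumElim_dotProduct_mulVec_sumElim [Fintype m] [Fintype n]
    (hA : A.IsHermitian) (hi : A.toBlocks₂₂ * i = A.toBlocks₂₁) (v : m → α) (w : n → α) :
    star (Sum.elim v w) ⬝ᵥ A *ᵥ Sum.elim v w =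
      star v ⬝ᵥ (A.toBlocks₁₁ - A.toBlocks₁₂ * i) *ᵥ v +
        star (w + i *ᵥ v) ⬝ᵥ A.toBlocks₂₂ *ᵥ (w + i *ᵥ v) := by
  have hshift (u : n → α) :
      star v ⬝ᵥ A.toBlocks₁₂ *ᵥ u = star (i *ᵥ v) ⬝ᵥ A.toBlocks₂₂ *ᵥ u := by
    rw [hA.toBlocks₁₂_eq_conjTranspose_mul hi, ← mulVec_mulVec, dotProduct_mulVec, star_mulVec]
  conv_lhs => rw [← A.fromBlocks_toBlocks]
  rw [fromBlocks_mulVec, Sum.elim_comp_inl, Sum.elim_comp_inr, Function.star_sumElim,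
    sumElim_dotProduct_sumElim, ← hi, sub_mulVec, ← mulVec_mulVec, ← mulVec_mulVec]
  simp only [mulVec_add, dotProduct_add, star_add, add_dotProduct, dotProduct_sub, hshift]
  ring

end HermitianBlocks

end Matrix

/-- For a real positive semidefinite block matrix `A`, the kernel-image trace of
`I − A` is defined; its value is `I − A'` where `A' = A₁₁ − A₁₂·i` for any `i` with
`A₂₂·i = A₂₁`, and `vᵀA'v` is the minimum of the quadratic form of `A` over all
extensions `(v,w)`, attained at `w = −i·v`. -/
theorem trKI_of_posSemidef {p q : ℕ}
    (A : Matrix (Fin p ⊕ Fin q) (Fin p ⊕ Fin q) ℝ) (hA : A.PosSemidef) :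
    -- (i)
    ((∃ i : Matrix (Fin q) (Fin p) ℝ, A.toBlocks₂₂ * i = A.toBlocks₂₁) ∧
     (∀ x : Fin q → ℝ, A.toBlocks₂₂.mulVec x = 0 → A.toBlocks₁₂.mulVec x = 0) ∧
     (∃ (k : Matrix (Fin p) (Fin q) ℝ) (i : Matrix (Fin q) (Fin p) ℝ),
        KIWm (1 - A) k i)) ∧
    -- (ii)
    (∀ i : Matrix (Fin q) (Fin p) ℝ, A.toBlocks₂₂ * i = A.toBlocks₂₁ →
      (∀ (k : Matrix (Fin p) (Fin q) ℝ) (i' : Matrix (Fin q) (Fin p) ℝ),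
        KIWm (1 - A) k i' →
        (1 - A).toBlocks₁₁ + (1 - A).toBlocks₁₂ * i' =
          1 - (A.toBlocks₁₁ - A.toBlocks₁₂ * i)) ∧
      (∀ v : Fin p → ℝ,
        (∀ w : Fin q → ℝ,
          v ⬝ᵥ (A.toBlocks₁₁ - A.toBlocks₁₂ * i).mulVec v ≤
            (Sum.elim v w) ⬝ᵥ A.mulVec (Sum.elim v w)) ∧
        v ⬝ᵥ (A.toBlocks₁₁ - A.toBlocks₁₂ * i).mulVec v =
          (Sum.elim v (-(i.mulVec v))) ⬝ᵥ A.mulVec (Sum.elim v (-(i.mulVec v))))) := by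
  have hA₂₂ : A.toBlocks₂₂.PosSemidef := hA.submatrix Sum.inr
  have hker (x : Fin q → ℝ) : A.toBlocks₂₂ *ᵥ x = 0 → A.toBlocks₁₂ *ᵥ x = 0 :=
    hA.toBlocks₁₂_mulVec_eq_zero
  have hblocks : 1 - A =
      fromBlocks (1 - A.toBlocks₁₁) (-A.toBlocks₁₂) (-A.toBlocks₂₁) (1 - A.toBlocks₂₂) := by
    conv_lhs => rw [← A.fromBlocks_toBlocks, ← fromBlocks_one, sub_eq_add_neg, fromBlocks_neg,
      fromBlocks_add]
    simp [sub_eq_add_neg]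
  have hKIWm (k i) : KIWm (1 - A) k i ↔
      A.toBlocks₂₂ * i = -A.toBlocks₂₁ ∧ k * A.toBlocks₂₂ = -A.toBlocks₁₂ := by
    simp [KIWm, hblocks]
  obtain ⟨i₀, hi₀⟩ : ∃ i : Matrix (Fin q) (Fin p) ℝ, A.toBlocks₂₂ * i = A.toBlocks₂₁ :=
    hA₂₂.isHermitian.exists_mul_eq fun x hx => by
      rw [hA.isHermitian.conjTranspose_toBlocks₂₁]
      exact hker x hx
  refine ⟨⟨⟨i₀, hi₀⟩, hker, -i₀ᴴ, -i₀, (hKIWm _ _).mpr ⟨?_, ?_⟩⟩, fun i hi => ?_⟩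
  · rw [Matrix.mul_neg, hi₀]
  · rw [Matrix.neg_mul, ← hA.isHermitian.toBlocks₁₂_eq_conjTranspose_mul hi₀]
  have hschur (v : Fin p → ℝ) (w : Fin q → ℝ) :
      Sum.elim v w ⬝ᵥ A *ᵥ Sum.elim v w = v ⬝ᵥ (A.toBlocks₁₁ - A.toBlocks₁₂ * i) *ᵥ v +
        (w + i *ᵥ v) ⬝ᵥ A.toBlocks₂₂ *ᵥ (w + i *ᵥ v) := by
    simpa using hA.isHermitian.star_sumElim_dotProduct_mulVec_sumElim hi v w
  refine ⟨fun k i' hi' => ?_, fun v => ⟨fun w => ?_, by simp [hschur]⟩⟩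
  · have hi'₁₂ : A.toBlocks₁₂ * i' = -(A.toBlocks₁₂ * i) := by
      rw [hA.isHermitian.toBlocks₁₂_eq_conjTranspose_mul hi, Matrix.mul_assoc, Matrix.mul_assoc,
        ((hKIWm k i').mp hi').1, hi, Matrix.mul_neg]
    rw [hblocks, toBlocks_fromBlocks₁₁, toBlocks_fromBlocks₁₂, Matrix.neg_mul, hi'₁₂, neg_neg]
    abel
  · rw [hschur]
    simpa using hA₂₂.dotProduct_mulVec_nonneg (w + i *ᵥ v)
end

section
/- In a strict symmetric monoidal paracategory, for all arrows p : A → B and q : C → D, the composites [p⊗1_C, 1_B⊗q] and [1_A⊗q, p⊗1_D] are both defined and both equal to p⊗q. Moreover, for all composable paths r⃗ and s⃗, [r⃗, p⊗1, 1⊗q, s⃗] ≃ [r⃗, p⊗q, s⃗] ≃ [r⃗, 1⊗q, p⊗1, s⃗]. -/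
universe w w' u v u' v'

/-- Composable paths of arrows in a directed graph. -/
inductive PPath {Obj : Type u} (Hom : Obj → Obj → Type v) : Obj → Obj → Type (max u v)
  | nil (A : Obj) : PPath Hom A A
  | cons {A B C : Obj} (f : Hom A B) (p : PPath Hom B C) : PPath Hom A C

namespace PPath

variable {Obj : Type u} {Hom : Obj → Obj → Type v}

/-- Concatenation of paths. -/
def append : ∀ {A B C : Obj}, PPath Hom A B → PPath Hom B C → PPath Hom A C
  | _, _, _, .nil _, q => q
  | _, _, _, .cons f p, q => .cons f (append p q)

/-- The path of length one on an arrow. -/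
def single {A B : Obj} (f : Hom A B) : PPath Hom A B := .cons f (.nil B)

/-- The image of a path under a graph homomorphism. -/
def map {Obj' : Type u'} {Hom' : Obj' → Obj' → Type v'} (φ : Obj → Obj')
    (F : ∀ {A B : Obj}, Hom A B → Hom' (φ A) (φ B)) :
    ∀ {A B : Obj}, PPath Hom A B → PPath Hom' (φ A) (φ B)
  | _, _, .nil A => .nil (φ A)
  | _, _, .cons f p => .cons (F f) (map φ (fun f => F f) p)

end PPath

/-- Transport of an arrow of a graph along equalities of its endpoints. -/
def castHom {Obj : Type u} {Hom : Obj → Obj → Type v} {A A' B B' : Obj}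
    (h₁ : A = A') (h₂ : B = B') (f : Hom A B) : Hom A' B' := h₁ ▸ h₂ ▸ f

/-- A paracategory: a directed graph together with a partial composition operation on
paths, such that empty paths compose (to the identity `pid`), singleton paths compose
to themselves, and composition satisfies the splicing (flattening) law. -/
structure Paracategory : Type (max (u + 1) (v + 1)) where
  Obj : Type u
  Hom : Obj → Obj → Type v
  comp : ∀ {A B : Obj}, PPath Hom A B → Option (Hom A B)
  pid : ∀ A : Obj, Hom A A
  comp_nil : ∀ A : Obj, comp (.nil A) = some (pid A)
  comp_single : ∀ {A B : Obj} (f : Hom A B), comp (PPath.single f) = some f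
  comp_splice : ∀ {A B C D : Obj} (r : PPath Hom A B) (p : PPath Hom B C)
    (s : PPath Hom C D) (v : Hom B C), comp p = some v →
    comp (r.append (.cons v s)) = comp (r.append (p.append s))

/-- A paracategory is total when every path composes; total paracategories are
precisely (the underlying graphs with path-composition of) ordinary categories. -/
def Paracategory.total (C : Paracategory.{u, v}) : Prop :=
  ∀ (A B : C.Obj) (p : PPath C.Hom A B), (C.comp p).isSome

/-- Pointwise tensor of two paths of the same length. -/
inductive PathTensor {Obj : Type u} {Hom : Obj → Obj → Type v}
    (tObj : Obj → Obj → Obj)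
    (tHom : ∀ (A B C D : Obj), Hom A B → Hom C D → Hom (tObj A C) (tObj B D)) :
    ∀ {A B C D : Obj}, PPath Hom A B → PPath Hom C D →
      PPath Hom (tObj A C) (tObj B D) → Prop
  | nil (A C : Obj) : PathTensor tObj tHom (.nil A) (.nil C) (.nil (tObj A C))
  | cons {A B C D E F : Obj} (f : Hom A B) (g : Hom C D) {p : PPath Hom B E}
      {q : PPath Hom D F} {r : PPath Hom (tObj B D) (tObj E F)} :
      PathTensor tObj tHom p q r →
      PathTensor tObj tHom (.cons f p) (.cons g q) (.cons (tHom _ _ _ _ f g) r)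

/-- A strict symmetric monoidal paracategory. -/
structure SSMParacategory extends Paracategory.{u, v} where
  tObj : Obj → Obj → Obj
  unit : Obj
  tHom : ∀ {A B C D : Obj}, Hom A B → Hom C D → Hom (tObj A C) (tObj B D)
  tObj_assoc : ∀ A B C, tObj (tObj A B) C = tObj A (tObj B C)
  tObj_unit_left : ∀ A, tObj unit A = A
  tObj_unit_right : ∀ A, tObj A unit = A
  tHom_assoc : ∀ {A B C D E F : Obj} (f : Hom A B) (g : Hom C D) (h : Hom E F),
    castHom (tObj_assoc A C E) (tObj_assoc B D F) (tHom (tHom f g) h) =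
      tHom f (tHom g h)
  tHom_unit_left : ∀ {A B : Obj} (f : Hom A B),
    castHom (tObj_unit_left A) (tObj_unit_left B) (tHom (pid unit) f) = f
  tHom_unit_right : ∀ {A B : Obj} (f : Hom A B),
    castHom (tObj_unit_right A) (tObj_unit_right B) (tHom f (pid unit)) = f
  tensor_comp : ∀ {A B C D : Obj} {p : PPath Hom A B} {q : PPath Hom C D}
    {r : PPath Hom (tObj A C) (tObj B D)},
    PathTensor tObj (fun _ _ _ _ f g => tHom f g) p q r →
    ∀ (vp : Hom A B) (vq : Hom C D), comp p = some vp → comp q = some vq →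
      comp r = some (tHom vp vq)
  braid : ∀ A B : Obj, Hom (tObj A B) (tObj B A)
  braid_total_left : ∀ {X A B Y : Obj} (f : Hom (tObj X (tObj B A)) Y),
    (comp (.cons (tHom (pid X) (braid A B)) (PPath.single f))).isSome
  braid_total_right : ∀ {X A B Y : Obj} (g : Hom Y (tObj X (tObj A B))),
    (comp (.cons g (PPath.single (tHom (pid X) (braid A B))))).isSome
  braid_natural_left : ∀ {A A' B : Obj} (f : Hom A A'),
    ∃ w, comp (.cons (tHom f (pid B)) (PPath.single (braid A' B))) = some w ∧
      comp (.cons (braid A B) (PPath.single (tHom (pid B) f))) = some w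
  braid_natural_right : ∀ {A B B' : Obj} (g : Hom B B'),
    ∃ w, comp (.cons (tHom (pid A) g) (PPath.single (braid A B'))) = some w ∧
      comp (.cons (braid A B) (PPath.single (tHom g (pid A)))) = some w
  braid_symmetry : ∀ A B : Obj,
    comp (.cons (braid A B) (PPath.single (braid B A))) = some (pid (tObj A B))
  braid_hexagon : ∀ A B C : Obj,
    comp (.cons (tHom (braid A B) (pid C))
        (PPath.single (castHom (tObj_assoc B A C).symm (tObj_assoc B C A).symm
          (tHom (pid B) (braid A C))))) =
      some (castHom (tObj_assoc A B C).symm rfl (braid A (tObj B C)))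

/-- A strict symmetric monoidal functor of paracategories. -/
structure SSMFunctor (C : SSMParacategory.{u, v}) (D : SSMParacategory.{u', v'}) where
  obj : C.Obj → D.Obj
  map : ∀ {A B : C.Obj}, C.Hom A B → D.Hom (obj A) (obj B)
  map_comp : ∀ {A B : C.Obj} (p : PPath C.Hom A B) (v : C.Hom A B),
    C.comp p = some v → D.comp (p.map obj (fun f => map f)) = some (map v)
  obj_tensor : ∀ A B : C.Obj, obj (C.tObj A B) = D.tObj (obj A) (obj B)
  obj_unit : obj C.unit = D.unit
  map_tensor : ∀ {A B A' B' : C.Obj} (f : C.Hom A B) (g : C.Hom A' B'),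
    castHom (obj_tensor A A') (obj_tensor B B') (map (C.tHom f g)) =
      D.tHom (map f) (map g)
  map_braid : ∀ A B : C.Obj,
    castHom (obj_tensor A B) (obj_tensor B A) (map (C.braid A B)) =
      D.braid (obj A) (obj B)

/-- Faithfulness of a functor of paracategories. -/
def SSMFunctor.Faithful {C : SSMParacategory.{u, v}} {D : SSMParacategory.{u', v'}}
    (F : SSMFunctor C D) : Prop :=
  ∀ (A B : C.Obj) (f g : C.Hom A B), F.map f = F.map g → f = g

/-- Fullness of a functor of paracategories. -/
def SSMFunctor.Full {C : SSMParacategory.{u, v}} {D : SSMParacategory.{u', v'}}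
    (F : SSMFunctor C D) : Prop :=
  ∀ (A B : C.Obj) (g : D.Hom (F.obj A) (F.obj B)), ∃ f : C.Hom A B, F.map f = g

theorem comp_id_right_aux (C : Paracategory.{u, v}) {A B : C.Obj} (f : C.Hom A B) :
    C.comp (.cons f (PPath.single (C.pid B))) = some f := by
  have h := C.comp_splice (PPath.single f) (.nil B) (.nil B) (C.pid B) (C.comp_nil B)
  exact h.trans (C.comp_single f)

theorem comp_id_left_aux (C : Paracategory.{u, v}) {A B : C.Obj} (f : C.Hom A B) :
    C.comp (.cons (C.pid A) (PPath.single f)) = some f := by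
  have h := C.comp_splice (.nil A) (.nil A) (PPath.single f) (C.pid A) (C.comp_nil A)
  exact h.trans (C.comp_single f)

/-- In a strict symmetric monoidal paracategory, `[p⊗1, 1⊗q]` and `[1⊗q, p⊗1]` are
both defined and equal to `p⊗q`; moreover, inside any composite, the consecutive
occurrences `p⊗1, 1⊗q` (or `1⊗q, p⊗1`) can be replaced by `p⊗q` up to Kleene
equality. -/
theorem tensor_interchange (C : SSMParacategory.{u, v}) {A B X Y : C.Obj}
    (p : C.Hom A B) (q : C.Hom X Y) :
    C.comp (.cons (C.tHom p (C.pid X)) (PPath.single (C.tHom (C.pid B) q))) =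
      some (C.tHom p q) ∧
    C.comp (.cons (C.tHom (C.pid A) q) (PPath.single (C.tHom p (C.pid Y)))) =
      some (C.tHom p q) ∧
    ∀ {W Z : C.Obj} (r : PPath C.Hom W (C.tObj A X)) (s : PPath C.Hom (C.tObj B Y) Z),
      C.comp (r.append (.cons (C.tHom p (C.pid X))
          (.cons (C.tHom (C.pid B) q) s))) =
        C.comp (r.append (.cons (C.tHom p q) s)) ∧
      C.comp (r.append (.cons (C.tHom p q) s)) =
        C.comp (r.append (.cons (C.tHom (C.pid A) q)
          (.cons (C.tHom p (C.pid Y)) s))) := by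
  have h1 : C.comp (.cons (C.tHom p (C.pid X)) (PPath.single (C.tHom (C.pid B) q))) =
      some (C.tHom p q) := by
    have ht : PathTensor C.tObj (fun _ _ _ _ f g => C.tHom f g)
        (.cons p (PPath.single (C.pid B))) (.cons (C.pid X) (PPath.single q))
        (.cons (C.tHom p (C.pid X)) (.cons (C.tHom (C.pid B) q) (.nil _))) := by
      exact .cons p (C.pid X) (.cons (C.pid B) q (.nil B Y))
    exact C.tensor_comp ht p q (comp_id_right_aux _ p) (comp_id_left_aux _ q)
  have h2 : C.comp (.cons (C.tHom (C.pid A) q) (PPath.single (C.tHom p (C.pid Y)))) =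
      some (C.tHom p q) := by
    have ht : PathTensor C.tObj (fun _ _ _ _ f g => C.tHom f g)
        (.cons (C.pid A) (PPath.single p)) (.cons q (PPath.single (C.pid Y)))
        (.cons (C.tHom (C.pid A) q) (.cons (C.tHom p (C.pid Y)) (.nil _))) := by
      exact .cons (C.pid A) q (.cons p (C.pid Y) (.nil B Y))
    exact C.tensor_comp ht p q (comp_id_left_aux _ p) (comp_id_right_aux _ q)
  refine ⟨h1, h2, fun r s => ⟨?_, ?_⟩⟩
  · exact (C.comp_splice r (.cons (C.tHom p (C.pid X))
      (.cons (C.tHom (C.pid B) q) (.nil _))) s (C.tHom p q) h1).symm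
  · exact C.comp_splice r (.cons (C.tHom (C.pid A) q)
      (.cons (C.tHom p (C.pid Y)) (.nil _))) s (C.tHom p q) h2
end

section
/- In the definition of a strict symmetric monoidal paracategory, given all the remaining structure and axioms, the tensor-functoriality condition [f₁,…,fₙ]⊗[g₁,…,gₙ] ⊑ [f₁⊗g₁,…,fₙ⊗gₙ] (for all n ≥ 0 and all composable paths f⃗ : A → B, g⃗ : C → D of equal length) is equivalent to the conjunction of: (a) [f,f']⊗[g,g'] ⊑ [f⊗g, f'⊗g'] for all composable pairs of arrows f,f' and g,g'; and (b) 1⊗[p₁,…,pₙ] ⊑ [1⊗p₁,…,1⊗pₙ] and [p₁,…,pₙ]⊗1 ⊑ [p₁⊗1,…,pₙ⊗1] for all composable paths p⃗ and all identity arrows 1. -/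
universe w w' u v u' v'

/-- A strict symmetric monoidal paracategory, minus the tensor-functoriality axiom. -/
structure SSMParacategoryCore extends Paracategory.{u, v} where
  tObj : Obj → Obj → Obj
  unit : Obj
  tHom : ∀ {A B C D : Obj}, Hom A B → Hom C D → Hom (tObj A C) (tObj B D)
  tObj_assoc : ∀ A B C, tObj (tObj A B) C = tObj A (tObj B C)
  tObj_unit_left : ∀ A, tObj unit A = A
  tObj_unit_right : ∀ A, tObj A unit = A
  tHom_assoc : ∀ {A B C D E F : Obj} (f : Hom A B) (g : Hom C D) (h : Hom E F),
    castHom (tObj_assoc A C E) (tObj_assoc B D F) (tHom (tHom f g) h) =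
      tHom f (tHom g h)
  tHom_unit_left : ∀ {A B : Obj} (f : Hom A B),
    castHom (tObj_unit_left A) (tObj_unit_left B) (tHom (pid unit) f) = f
  tHom_unit_right : ∀ {A B : Obj} (f : Hom A B),
    castHom (tObj_unit_right A) (tObj_unit_right B) (tHom f (pid unit)) = f
  braid : ∀ A B : Obj, Hom (tObj A B) (tObj B A)
  braid_total_left : ∀ {X A B Y : Obj} (f : Hom (tObj X (tObj B A)) Y),
    (comp (.cons (tHom (pid X) (braid A B)) (PPath.single f))).isSome
  braid_total_right : ∀ {X A B Y : Obj} (g : Hom Y (tObj X (tObj A B))),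
    (comp (.cons g (PPath.single (tHom (pid X) (braid A B))))).isSome
  braid_natural_left : ∀ {A A' B : Obj} (f : Hom A A'),
    ∃ w, comp (.cons (tHom f (pid B)) (PPath.single (braid A' B))) = some w ∧
      comp (.cons (braid A B) (PPath.single (tHom (pid B) f))) = some w
  braid_natural_right : ∀ {A B B' : Obj} (g : Hom B B'),
    ∃ w, comp (.cons (tHom (pid A) g) (PPath.single (braid A B'))) = some w ∧
      comp (.cons (braid A B) (PPath.single (tHom g (pid A)))) = some w
  braid_symmetry : ∀ A B : Obj,
    comp (.cons (braid A B) (PPath.single (braid B A))) = some (pid (tObj A B))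
  braid_hexagon : ∀ A B C : Obj,
    comp (.cons (tHom (braid A B) (pid C))
        (PPath.single (castHom (tObj_assoc B A C).symm (tObj_assoc B C A).symm
          (tHom (pid B) (braid A C))))) =
      some (castHom (tObj_assoc A B C).symm rfl (braid A (tObj B C)))


/- ------------------------- auxiliary material ------------------------- -/

namespace PPath

theorem append_assoc' {Obj : Type u} {Hom : Obj → Obj → Type v} :
    ∀ {A B C D : Obj} (p : PPath Hom A B) (q : PPath Hom B C) (r : PPath Hom C D),
      (p.append q).append r = p.append (q.append r)
  | _, _, _, _, .nil _, _, _ => rfl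
  | _, _, _, _, .cons f p, q, r => congrArg (PPath.cons f) (append_assoc' p q r)

theorem nil_append {Obj : Type u} {Hom : Obj → Obj → Type v} {A B : Obj}
    (p : PPath Hom A B) : (PPath.nil A).append p = p := rfl

theorem append_nil' {Obj : Type u} {Hom : Obj → Obj → Type v} :
    ∀ {A B : Obj} (p : PPath Hom A B), p.append (.nil B) = p
  | _, _, .nil _ => rfl
  | _, _, .cons f p => congrArg (PPath.cons f) (append_nil' p)

/-- The path of identities at `E` with the same length as a given path. -/
def constPath {Obj : Type u} {Hom : Obj → Obj → Type v} {E : Obj} (e : Hom E E) :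
    ∀ {A B : Obj}, PPath Hom A B → PPath Hom E E
  | _, _, .nil _ => .nil E
  | _, _, .cons _ p => .cons e (constPath e p)

end PPath

namespace Paracategory

theorem comp_cons_pid (C : Paracategory.{u, v}) {A B : C.Obj} (t : PPath C.Hom A B) :
    C.comp (.cons (C.pid A) t) = C.comp t :=
  C.comp_splice (.nil A) (.nil A) t (C.pid A) (C.comp_nil A)

theorem comp_pid_left (C : Paracategory.{u, v}) {A B : C.Obj} (f : C.Hom A B) :
    C.comp (.cons (C.pid A) (PPath.single f)) = some f :=
  (C.comp_cons_pid (PPath.single f)).trans (C.comp_single f)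

theorem comp_pid_right (C : Paracategory.{u, v}) {A B : C.Obj} (f : C.Hom A B) :
    C.comp (.cons f (PPath.single (C.pid B))) = some f := by
  have h := C.comp_splice (PPath.single f) (.nil B) (.nil B) (C.pid B) (C.comp_nil B)
  exact h.trans (C.comp_single f)

theorem comp_constPath (C : Paracategory.{u, v}) {E : C.Obj} :
    ∀ {A B : C.Obj} (p : PPath C.Hom A B),
      C.comp (PPath.constPath (C.pid E) p) = some (C.pid E)
  | _, _, .nil _ => C.comp_nil E
  | _, _, .cons _ p => (C.comp_cons_pid _).trans (comp_constPath C p)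

end Paracategory

namespace SSMParacategoryCore

variable (C : SSMParacategoryCore.{u, v})

/-- The binary tensor-functoriality axiom. -/
def BinAx : Prop :=
  ∀ {A B D X Y Z : C.Obj} (f : C.Hom A B) (f' : C.Hom B D)
      (g : C.Hom X Y) (g' : C.Hom Y Z) (v : C.Hom A D) (w : C.Hom X Z),
      C.comp (.cons f (PPath.single f')) = some v →
      C.comp (.cons g (PPath.single g')) = some w →
      C.comp (.cons (C.tHom f g) (PPath.single (C.tHom f' g'))) = some (C.tHom v w)

theorem mixed1 (hb : C.BinAx) {A B X Y : C.Obj} (f : C.Hom A B) (g : C.Hom X Y) :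
    C.comp (.cons (C.tHom f (C.pid X)) (PPath.single (C.tHom (C.pid B) g))) =
      some (C.tHom f g) :=
  hb f (C.pid B) (C.pid X) g f g (C.comp_pid_right f) (C.comp_pid_left g)

theorem mixed2 (hb : C.BinAx) {A B X Y : C.Obj} (f : C.Hom A B) (g : C.Hom X Y) :
    C.comp (.cons (C.tHom (C.pid A) g) (PPath.single (C.tHom f (C.pid Y)))) =
      some (C.tHom f g) :=
  hb (C.pid A) f g (C.pid Y) f g (C.comp_pid_left f) (C.comp_pid_right g)

theorem swapLemma (hb : C.BinAx) {X X' : C.Obj} (g : C.Hom X X') :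
    ∀ {A' B : C.Obj} (p : PPath C.Hom A' B) {W Z : C.Obj}
      (pre : PPath C.Hom W (C.tObj A' X)) (s : PPath C.Hom (C.tObj B X') Z),
    C.comp (pre.append (.cons (C.tHom (C.pid A') g)
        ((p.map (fun U => C.tObj U X') (fun h => C.tHom h (C.pid X'))).append s))) =
    C.comp (pre.append ((p.map (fun U => C.tObj U X) (fun h => C.tHom h (C.pid X))).append
        (.cons (C.tHom (C.pid B) g) s))) := by
  intro A' B p
  induction p with
  | nil A => intro W Z pre s; rfl
  | cons f p ih =>
    intro W Z pre s
    rename_i A A₂ _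
    have h1 := C.mixed2 hb f g
    have h2 := C.mixed1 hb f g
    have step1 := C.comp_splice pre
      (.cons (C.tHom (C.pid A) g) (PPath.single (C.tHom f (C.pid X'))))
      ((p.map (fun U => C.tObj U X') (fun h => C.tHom h (C.pid X'))).append s)
      (C.tHom f g) h1
    have step2 := C.comp_splice pre
      (.cons (C.tHom f (C.pid X)) (PPath.single (C.tHom (C.pid A₂) g)))
      ((p.map (fun U => C.tObj U X') (fun h => C.tHom h (C.pid X'))).append s)
      (C.tHom f g) h2
    have ih' := ih (pre.append (PPath.single (C.tHom f (C.pid X)))) s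
    simp only [PPath.append_assoc'] at ih'
    exact (step1.symm.trans step2).trans ih'

theorem interleave (hb : C.BinAx) :
    ∀ {A B X Y : C.Obj} {p : PPath C.Hom A B} {q : PPath C.Hom X Y}
      {r : PPath C.Hom (C.tObj A X) (C.tObj B Y)},
      PathTensor C.tObj (fun _ _ _ _ f g => C.tHom f g) p q r →
      ∀ {W Z : C.Obj} (pre : PPath C.Hom W (C.tObj A X)) (s : PPath C.Hom (C.tObj B Y) Z),
      C.comp (pre.append (r.append s)) =
      C.comp (pre.append
        ((p.map (fun U => C.tObj U X) (fun h => C.tHom h (C.pid X))).append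
          ((q.map (fun U => C.tObj B U) (fun h => C.tHom (C.pid B) h)).append s))) := by
  intro A B X Y p q r pt
  induction pt with
  | nil A X => intro W Z pre s; rfl
  | cons f g pt ih =>
    intro W Z pre s
    rename_i A A₂ X X₂ _ _ p q r
    have h1 := C.mixed1 hb f g
    have step1 := C.comp_splice pre
      (.cons (C.tHom f (C.pid X)) (PPath.single (C.tHom (C.pid A₂) g)))
      (r.append s) (C.tHom f g) h1
    have ih' := ih (pre.append
        (.cons (C.tHom f (C.pid X)) (PPath.single (C.tHom (C.pid A₂) g)))) s
    simp only [PPath.append_assoc'] at ih'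
    have sw := C.swapLemma hb g p (pre.append (PPath.single (C.tHom f (C.pid X))))
      ((q.map (fun U => C.tObj _ U) (fun h => C.tHom (C.pid _) h)).append s)
    simp only [PPath.append_assoc'] at sw
    exact (step1.trans ih').trans sw

theorem pathTensor_left (E : C.Obj) :
    ∀ {A B : C.Obj} (p : PPath C.Hom A B),
      PathTensor C.tObj (fun _ _ _ _ f g => C.tHom f g)
        (PPath.constPath (C.pid E) p) p
        (p.map (fun X => C.tObj E X) (fun f => C.tHom (C.pid E) f))
  | _, _, .nil A => .nil E A
  | _, _, .cons f p => .cons (C.pid E) f (pathTensor_left E p)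

theorem pathTensor_right (E : C.Obj) :
    ∀ {A B : C.Obj} (p : PPath C.Hom A B),
      PathTensor C.tObj (fun _ _ _ _ f g => C.tHom f g)
        p (PPath.constPath (C.pid E) p)
        (p.map (fun X => C.tObj X E) (fun f => C.tHom f (C.pid E)))
  | _, _, .nil A => .nil A E
  | _, _, .cons f p => .cons f (C.pid E) (pathTensor_right E p)

end SSMParacategoryCore

/-- In the definition of a strict symmetric monoidal paracategory, given all the
remaining structure and axioms, the tensor-functoriality condition
`[f₁,…,fₙ]⊗[g₁,…,gₙ] ⊑ [f₁⊗g₁,…,fₙ⊗gₙ]` is equivalent to the conjunction of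
(a) the binary case `[f,f']⊗[g,g'] ⊑ [f⊗g, f'⊗g']`, and (b) whiskering with
identities: `1⊗[p⃗] ⊑ [1⊗p⃗]` and `[p⃗]⊗1 ⊑ [p⃗⊗1]`. -/
theorem tensor_functoriality_iff (C : SSMParacategoryCore.{u, v}) :
    (∀ {A B X Y : C.Obj} {p : PPath C.Hom A B} {q : PPath C.Hom X Y}
      {r : PPath C.Hom (C.tObj A X) (C.tObj B Y)},
      PathTensor C.tObj (fun _ _ _ _ f g => C.tHom f g) p q r →
      ∀ (vp : C.Hom A B) (vq : C.Hom X Y), C.comp p = some vp →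
        C.comp q = some vq → C.comp r = some (C.tHom vp vq))
    ↔
    ((∀ {A B D X Y Z : C.Obj} (f : C.Hom A B) (f' : C.Hom B D)
        (g : C.Hom X Y) (g' : C.Hom Y Z) (v : C.Hom A D) (w : C.Hom X Z),
        C.comp (.cons f (PPath.single f')) = some v →
        C.comp (.cons g (PPath.single g')) = some w →
        C.comp (.cons (C.tHom f g) (PPath.single (C.tHom f' g'))) =
          some (C.tHom v w)) ∧
     (∀ (E : C.Obj) {A B : C.Obj} (p : PPath C.Hom A B) (v : C.Hom A B),
        C.comp p = some v →
        C.comp (p.map (fun X => C.tObj E X) (fun f => C.tHom (C.pid E) f)) =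
            some (C.tHom (C.pid E) v) ∧
        C.comp (p.map (fun X => C.tObj X E) (fun f => C.tHom f (C.pid E))) =
            some (C.tHom v (C.pid E)))) := by
  constructor
  · intro H
    refine ⟨?_, ?_⟩
    · intro A B D X Y Z f f' g g' v w hv hw
      exact H (PathTensor.cons f g (PathTensor.cons f' g' (PathTensor.nil D Z))) v w hv hw
    · intro E A B p v hv
      exact ⟨H (C.pathTensor_left E p) (C.pid E) v (C.comp_constPath p) hv,
             H (C.pathTensor_right E p) v (C.pid E) hv (C.comp_constPath p)⟩
  · rintro ⟨hb, hw⟩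
    intro A B X Y p q r pt vp vq hp hq
    have h0 := C.interleave hb pt (.nil _) (.nil _)
    rw [PPath.nil_append, PPath.nil_append, PPath.append_nil', PPath.append_nil'] at h0
    have hL := (hw X p vp hp).2
    have hR := (hw B q vq hq).1
    have step1 := C.comp_splice (.nil _)
      (p.map (fun U => C.tObj U X) (fun h => C.tHom h (C.pid X)))
      (q.map (fun U => C.tObj B U) (fun h => C.tHom (C.pid B) h))
      (C.tHom vp (C.pid X)) hL
    have step2 := C.comp_splice (PPath.single (C.tHom vp (C.pid X)))
      (q.map (fun U => C.tObj B U) (fun h => C.tHom (C.pid B) h))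
      (.nil _) (C.tHom (C.pid B) vq) hR
    rw [PPath.append_nil'] at step2
    have hfin : C.comp (.cons (C.tHom vp (C.pid X))
        (PPath.single (C.tHom (C.pid B) vq))) = some (C.tHom vp vq) :=
      C.mixed1 hb vp vq
    exact ((h0.trans step1.symm).trans step2.symm).trans hfin
end
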